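/- arXiv:2108.11254 — 7 statements merged into one kernel-verified Lean document; each statement's English description precedes it below -/
import Mathlib

section
/- Let m ≥ 1 be an integer and t > 0. For w ∈ ℝ^m define S_N(t)w = e^t ((e^{2t} − 1)|w|² + 1)^{−1/2} w. Then for every w ∈ ℝ^m, |S_N(t)w| ≤ max{1, |w|}. In particular, if |w| ≤ 1 then |S_N(t)w| ≤ 1. -/
/-! With `c = eᵗ ≥ 1` and `a = |w|`, squaring reduces `|S_N(t)w| ≤ max 1 a` to the polynomial
inequality `c²a² ≤ max(1, a)² ((c² - 1)a² + 1)`: for `a ≤ 1` it says `a² ≤ 1`, and for `a ≥ 1`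
it says `(c² - 1) a² (a² - 1) ≥ 0`. -/

lemma sq_mul_le_max_sq_mul {c a : ℝ} (hc : 1 ≤ c) (ha : 0 ≤ a) :
    (c * a) ^ 2 ≤ max 1 a ^ 2 * ((c ^ 2 - 1) * a ^ 2 + 1) := by
  have hc2 : 0 ≤ c ^ 2 - 1 := by nlinarith
  rcases le_total a 1 with hle | hge
  · rw [max_eq_left hle]
    nlinarith
  · rw [max_eq_right hge]
    nlinarith [mul_nonneg (mul_nonneg hc2 (sq_nonneg a)) (by nlinarith : (0 : ℝ) ≤ a ^ 2 - 1)]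

lemma norm_smul_div_sqrt_le_max {E : Type*} [SeminormedAddCommGroup E] [NormedSpace ℝ E]
    {c : ℝ} (hc : 1 ≤ c) (w : E) :
    ‖(c / √((c ^ 2 - 1) * ‖w‖ ^ 2 + 1)) • w‖ ≤ max 1 ‖w‖ := by
  have hD : 0 < (c ^ 2 - 1) * ‖w‖ ^ 2 + 1 := by
    have : 0 ≤ c ^ 2 - 1 := by nlinarith
    positivity
  have hsqrt : 0 < √((c ^ 2 - 1) * ‖w‖ ^ 2 + 1) := Real.sqrt_pos.2 hD
  rw [norm_smul, Real.norm_of_nonneg (by positivity), div_mul_eq_mul_div, div_le_iff₀ hsqrt,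
    ← pow_le_pow_iff_left₀ (by positivity) (by positivity) two_ne_zero, mul_pow (max 1 ‖w‖),
    Real.sq_sqrt hD.le]
  exact sq_mul_le_max_sq_mul hc (norm_nonneg w)

theorem stmt_2_general (m : ℕ) (t : ℝ) (ht : 0 < t)
    (SN : EuclideanSpace ℝ (Fin m) → EuclideanSpace ℝ (Fin m))
    (hSN : ∀ w : EuclideanSpace ℝ (Fin m),
      SN w = (Real.exp t / Real.sqrt ((Real.exp (2 * t) - 1) * ‖w‖ ^ 2 + 1)) • w) :
    (∀ w : EuclideanSpace ℝ (Fin m), ‖SN w‖ ≤ max 1 ‖w‖) ∧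
      ∀ w : EuclideanSpace ℝ (Fin m), ‖w‖ ≤ 1 → ‖SN w‖ ≤ 1 := by
  have hexp : Real.exp (2 * t) = Real.exp t ^ 2 := by rw [sq, ← Real.exp_add, two_mul]
  have hbound (w : EuclideanSpace ℝ (Fin m)) : ‖SN w‖ ≤ max 1 ‖w‖ := by
    rw [hSN, hexp]
    exact norm_smul_div_sqrt_le_max (Real.one_le_exp ht.le) w
  exact ⟨hbound, fun w hw => max_eq_left hw ▸ hbound w⟩

/-- Maximum principle for the nonlinear propagator of the vector-valued
Allen-Cahn equation: `|S_N(t)w| ≤ max{1, |w|}`, and in particular `|w| ≤ 1` implies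
`|S_N(t)w| ≤ 1`. -/
theorem stmt_2 (m : ℕ) (hm : 1 ≤ m) (t : ℝ) (ht : 0 < t)
    (SN : EuclideanSpace ℝ (Fin m) → EuclideanSpace ℝ (Fin m))
    (hSN : ∀ w : EuclideanSpace ℝ (Fin m),
      SN w = (Real.exp t / Real.sqrt ((Real.exp (2 * t) - 1) * ‖w‖ ^ 2 + 1)) • w) :
    (∀ w : EuclideanSpace ℝ (Fin m), ‖SN w‖ ≤ max 1 ‖w‖) ∧
      ∀ w : EuclideanSpace ℝ (Fin m), ‖w‖ ≤ 1 → ‖SN w‖ ≤ 1 :=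
  stmt_2_general m t ht SN hSN
end

section
/- Let m ≥ 1 be an integer and τ > 0. Define G : ℝ^m → ℝ by G(u) = |u|²/(2τ) − (e^τ/(τ(e^{2τ} − 1))) ((1 + (e^{2τ} − 1)|u|²)^{1/2} − 1), and define g : ℝ^m → ℝ^m by g(u) = (1/τ) u − (e^τ/(τ ((e^{2τ} − 1)|u|² + 1)^{1/2})) u. Then for all u, v ∈ ℝ^m: −⟨g(u), v − u⟩ ≤ G(u) − G(v) + |v − u|²/(2τ). -/
/-! With `c = e^{2τ} - 1` and `φ(w) = √(1 + c‖w‖²)`, the quadratic parts of both sides cancel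
up to `-⟨u, v - u⟩/τ`, and what remains is `e^τ/(τc)` times the gradient inequality
`c⟨u, v - u⟩/φ(u) ≤ φ(v) - φ(u)` of the convex function `φ`. That inequality amounts to
`1 + c⟨u, v⟩ ≤ φ(u) φ(v)`, which is Cauchy–Schwarz for the vectors `(1, √c u)` and `(1, √c v)`. -/

open Real RealInnerProductSpace

variable {E : Type*} [NormedAddCommGroup E] [InnerProductSpace ℝ E]

theorem one_add_mul_inner_le_sqrt_mul_sqrt {c : ℝ} (hc : 0 ≤ c) (u v : E) :
    1 + c * ⟪u, v⟫ ≤ √(1 + c * ‖u‖ ^ 2) * √(1 + c * ‖v‖ ^ 2) := by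
  have hcs : 1 + c * ⟪u, v⟫ ≤ 1 + c * (‖u‖ * ‖v‖) := by
    gcongr
    exact real_inner_le_norm u v
  refine hcs.trans ?_
  rw [← sqrt_mul (by positivity)]
  apply le_sqrt_of_sq_le
  nlinarith [mul_nonneg hc (sq_nonneg (‖u‖ - ‖v‖))]

theorem div_sqrt_mul_inner_sub_le_sqrt_sub_sqrt {c : ℝ} (hc : 0 ≤ c) (u v : E) :
    c / √(1 + c * ‖u‖ ^ 2) * ⟪u, v - u⟫ ≤ √(1 + c * ‖v‖ ^ 2) - √(1 + c * ‖u‖ ^ 2) := by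
  set a := √(1 + c * ‖u‖ ^ 2)
  have ha : 0 < a := sqrt_pos.2 (by positivity)
  have ha_sq : a ^ 2 = 1 + c * ‖u‖ ^ 2 := sq_sqrt (by positivity)
  have hcs := one_add_mul_inner_le_sqrt_mul_sqrt hc u v
  rw [div_mul_eq_mul_div, div_le_iff₀ ha, inner_sub_right, real_inner_self_eq_norm_sq]
  linear_combination hcs + ha_sq

theorem stmt_5_general (m : ℕ) (τ : ℝ) (hτ : 0 < τ)
    (G : EuclideanSpace ℝ (Fin m) → ℝ)
    (hG : ∀ u : EuclideanSpace ℝ (Fin m),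
      G u = ‖u‖ ^ 2 / (2 * τ) -
        (Real.exp τ / (τ * (Real.exp (2 * τ) - 1))) *
          (Real.sqrt (1 + (Real.exp (2 * τ) - 1) * ‖u‖ ^ 2) - 1))
    (g : EuclideanSpace ℝ (Fin m) → EuclideanSpace ℝ (Fin m))
    (hg : ∀ u : EuclideanSpace ℝ (Fin m),
      g u = (1 / τ) • u -
        (Real.exp τ / (τ * Real.sqrt ((Real.exp (2 * τ) - 1) * ‖u‖ ^ 2 + 1))) • u) :
    ∀ u v : EuclideanSpace ℝ (Fin m),
      -(inner ℝ (g u) (v - u) : ℝ) ≤ G u - G v + ‖v - u‖ ^ 2 / (2 * τ) := by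
  intro u v
  set c := exp (2 * τ) - 1
  have hc : 0 < c := sub_pos.2 (one_lt_exp_iff.2 (by positivity))
  have hconv := mul_le_mul_of_nonneg_left (div_sqrt_mul_inner_sub_le_sqrt_sub_sqrt hc.le u v)
    (by positivity : 0 ≤ exp τ / (τ * c))
  have hquad : ‖u‖ ^ 2 / (2 * τ) - ‖v‖ ^ 2 / (2 * τ) + ‖v - u‖ ^ 2 / (2 * τ) = -⟪u, v - u⟫ / τ := by
    rw [norm_sub_sq_real, inner_sub_right, real_inner_self_eq_norm_sq, real_inner_comm]
    field_simp
    ring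
  have hcoef : exp τ / (τ * c) * (c / √(1 + c * ‖u‖ ^ 2) * ⟪u, v - u⟫)
      = exp τ / (τ * √(1 + c * ‖u‖ ^ 2)) * ⟪u, v - u⟫ := by
    field_simp
  rw [hcoef] at hconv
  rw [hg, hG, hG, add_comm _ 1, inner_sub_left, real_inner_smul_left, real_inner_smul_left]
  linear_combination hconv - hquad

/-- The key convexity-type inequality for the modified potential `G` and its
gradient `g`: for all `u, v ∈ ℝ^m`, `-⟨g(u), v - u⟩ ≤ G(u) - G(v) + |v - u|²/(2τ)`. -/
theorem stmt_5 (m : ℕ) (hm : 1 ≤ m) (τ : ℝ) (hτ : 0 < τ)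
    (G : EuclideanSpace ℝ (Fin m) → ℝ)
    (hG : ∀ u : EuclideanSpace ℝ (Fin m),
      G u = ‖u‖ ^ 2 / (2 * τ) -
        (Real.exp τ / (τ * (Real.exp (2 * τ) - 1))) *
          (Real.sqrt (1 + (Real.exp (2 * τ) - 1) * ‖u‖ ^ 2) - 1))
    (g : EuclideanSpace ℝ (Fin m) → EuclideanSpace ℝ (Fin m))
    (hg : ∀ u : EuclideanSpace ℝ (Fin m),
      g u = (1 / τ) • u -
        (Real.exp τ / (τ * Real.sqrt ((Real.exp (2 * τ) - 1) * ‖u‖ ^ 2 + 1))) • u) :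
    ∀ u v : EuclideanSpace ℝ (Fin m),
      -(inner ℝ (g u) (v - u) : ℝ) ≤ G u - G v + ‖v - u‖ ^ 2 / (2 * τ) :=
  stmt_5_general m τ hτ G hG g hg
end

section
/- Let m ≥ 1 be an integer and U₀ ∈ ℝ^{m×m}. For t ≥ 0, the matrix M(t) = (e^{2t} − 1) U₀U₀ᵀ + I is symmetric positive definite; define U(t) = (M(t)^{1/2})^{−1} e^t U₀, where M(t)^{1/2} is the unique symmetric positive semidefinite square root of M(t). Then U(0) = U₀, and for every t ≥ 0 the function U is differentiable at t with derivative U'(t) = U(t) − U(t)U(t)ᵀU(t). -/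
open Matrix


open Real in
private lemma phi_deriv_ac (d t : ℝ) (hd : 0 ≤ d) (ht : 0 ≤ t) :
    HasDerivAt (fun s => Real.exp s * (Real.sqrt ((Real.exp (2*s) - 1) * d + 1))⁻¹)
      (Real.exp t * (Real.sqrt ((Real.exp (2*t) - 1) * d + 1))⁻¹
        - d * (Real.exp t * (Real.sqrt ((Real.exp (2*t) - 1) * d + 1))⁻¹) ^ 3) t := by
  have hw : (0:ℝ) < (Real.exp (2*t) - 1) * d + 1 := by
    have h1 : (1:ℝ) ≤ Real.exp (2*t) := Real.one_le_exp (by linarith)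
    nlinarith
  have ha : Real.sqrt ((Real.exp (2*t) - 1) * d + 1) ≠ 0 := by positivity
  have hw' : HasDerivAt (fun s => (Real.exp (2*s) - 1) * d + 1)
      ((Real.exp (2*t) * 2) * d) t := by
    have := ((hasDerivAt_id t).const_mul 2).exp
    simpa using ((this.sub_const 1).mul_const d).add_const 1
  have hsq := hw'.sqrt (by positivity)
  have hinv := hsq.inv ha
  have := (Real.hasDerivAt_exp t).mul hinv
  convert this using 1
  case e'_4 => rfl
  case e'_5 => rfl
  case e'_8 => rfl
  simp only [Pi.inv_apply]
  set a := Real.sqrt ((Real.exp (2*t) - 1) * d + 1) with hadef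
  have ha2 : a ^ 2 = (Real.exp (2*t) - 1) * d + 1 := Real.sq_sqrt hw.le
  have h2t : Real.exp (2*t) = Real.exp t ^ 2 := by
    rw [two_mul, Real.exp_add]; ring
  have hapos : 0 < a := Real.sqrt_pos.mpr hw
  rw [h2t]
  field_simp
  ring


/-- The explicit nonlinear propagator for the matrix-valued Allen-Cahn
nonlinearity. Here `M t = (e^{2t} - 1) U₀U₀ᵀ + I`, `S t` is its unique symmetric positive
semidefinite square root, and `U t = (M t)^{-1/2} e^t U₀ = (S t)⁻¹ (e^t U₀)`. Then `M t`
is symmetric positive definite for `t ≥ 0`, `U 0 = U₀`, and `U' = U - UUᵀU` on `[0,∞)`. -/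
theorem stmt_6 (m : ℕ) (hm : 1 ≤ m) (U₀ : Matrix (Fin m) (Fin m) ℝ)
    (M S U : ℝ → Matrix (Fin m) (Fin m) ℝ)
    (hM : ∀ t : ℝ, M t = (Real.exp (2 * t) - 1) • (U₀ * U₀ᵀ) + 1)
    (hS : ∀ t : ℝ, 0 ≤ t → (S t).PosSemidef ∧ S t * S t = M t)
    (hU : ∀ t : ℝ, U t = (S t)⁻¹ * (Real.exp t • U₀)) :
    (∀ t : ℝ, 0 ≤ t → (M t).PosDef) ∧ U 0 = U₀ ∧
      ∀ t : ℝ, 0 ≤ t → ∀ i j : Fin m,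
        HasDerivWithinAt (fun s => U s i j)
          ((U t - U t * (U t)ᵀ * U t) i j) (Set.Ici 0) t := by
  have htrans : U₀ᴴ = U₀ᵀ := by ext i j; simp [conjTranspose_apply]
  have hP : (U₀ * U₀ᵀ).PosSemidef := by
    have := Matrix.posSemidef_self_mul_conjTranspose U₀
    rwa [htrans] at this
  have hc : ∀ t : ℝ, 0 ≤ t → 0 ≤ Real.exp (2 * t) - 1 := fun t ht => by
    have : (1:ℝ) ≤ Real.exp (2*t) := Real.one_le_exp (by linarith)
    linarith
  have hcP : ∀ t : ℝ, 0 ≤ t → ((Real.exp (2 * t) - 1) • (U₀ * U₀ᵀ)).PosSemidef := by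
    intro t ht
    constructor
    · unfold Matrix.IsHermitian
      rw [conjTranspose_smul, hP.1]
      simp
    · intro x
      exact (hP.smul (hc t ht)).2 x
  have hMpd : ∀ t : ℝ, 0 ≤ t → (M t).PosDef := by
    intro t ht
    rw [hM]
    exact Matrix.PosDef.posSemidef_add (hcP t ht) Matrix.PosDef.one
  -- spectral setup
  set hH := hP.1 with hHdef
  set Q : Matrix (Fin m) (Fin m) ℝ := (hH.eigenvectorUnitary : Matrix (Fin m) (Fin m) ℝ)
    with hQdef
  set d : Fin m → ℝ := hH.eigenvalues with hddef
  have hd : ∀ i, 0 ≤ d i := fun i => hP.eigenvalues_nonneg i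
  have hstar : star Q = Qᵀ := by ext i j; simp [Matrix.star_apply]
  have hQ1 : Q * Qᵀ = 1 := by
    rw [← hstar]; exact Matrix.mem_unitaryGroup_iff.mp hH.eigenvectorUnitary.2
  have hQ2 : Qᵀ * Q = 1 := by
    rw [← hstar]; exact Matrix.mem_unitaryGroup_iff'.mp hH.eigenvectorUnitary.2
  set C : (Fin m → ℝ) → Matrix (Fin m) (Fin m) ℝ :=
    fun v => Q * Matrix.diagonal v * Qᵀ with hCdef
  have hPC : U₀ * U₀ᵀ = C d := by
    have h := hH.spectral_theorem
    rw [RCLike.ofReal_real_eq_id, Function.id_comp, Unitary.conjStarAlgAut_apply, hstar] at h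
    exact h
  have hCmul : ∀ v w : Fin m → ℝ, C v * C w = C (fun i => v i * w i) := by
    intro v w
    simp only [hCdef]
    simp only [Matrix.mul_assoc]
    rw [← Matrix.mul_assoc Qᵀ Q, hQ2, Matrix.one_mul,
      ← Matrix.mul_assoc (Matrix.diagonal v), Matrix.diagonal_mul_diagonal]
  have hCsub : ∀ v w : Fin m → ℝ, C v - C w = C (fun k => v k - w k) := by
    intro v w
    simp only [hCdef]
    rw [← Matrix.sub_mul, ← Matrix.mul_sub, ← Matrix.diagonal_sub]
  have hCt : ∀ v, (C v)ᵀ = C v := by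
    intro v
    simp only [hCdef, Matrix.transpose_mul, Matrix.transpose_transpose,
      Matrix.diagonal_transpose, Matrix.mul_assoc]
  have hCone : C (fun _ => 1) = 1 := by
    simp only [hCdef]
    rw [show Matrix.diagonal (fun _ : Fin m => (1:ℝ)) = 1 from Matrix.diagonal_one,
      Matrix.mul_one, hQ1]
  have hMC : ∀ t : ℝ, M t = C (fun i => (Real.exp (2*t) - 1) * d i + 1) := by
    intro t
    rw [hM, hPC]
    simp only [hCdef]
    rw [show Matrix.diagonal (fun i => (Real.exp (2*t) - 1) * d i + 1)
        = (Real.exp (2*t) - 1) • Matrix.diagonal d + 1 from by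
      rw [← Matrix.diagonal_smul, ← Matrix.diagonal_one, ← Matrix.diagonal_add]; rfl]
    rw [Matrix.mul_add, Matrix.add_mul, Matrix.mul_one, hQ1, Matrix.mul_smul, Matrix.smul_mul]
  have hsqrtpos : ∀ t : ℝ, 0 ≤ t → ∀ i, 0 < Real.sqrt ((Real.exp (2*t) - 1) * d i + 1) := by
    intro t ht i
    have := hc t ht
    have := hd i
    apply Real.sqrt_pos.mpr
    nlinarith
  have hST : ∀ t : ℝ, 0 ≤ t →
      S t = C (fun i => Real.sqrt ((Real.exp (2*t) - 1) * d i + 1)) := by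
    intro t ht
    have hdg : (Matrix.diagonal (fun i => Real.sqrt ((Real.exp (2*t) - 1) * d i + 1))).PosSemidef :=
      Matrix.posSemidef_diagonal_iff.mpr fun i => Real.sqrt_nonneg _
    have hpsd : (C (fun i => Real.sqrt ((Real.exp (2*t) - 1) * d i + 1))).PosSemidef := by
      have h := hdg.mul_mul_conjTranspose_same Q
      have hQh : Qᴴ = Qᵀ := by ext a b; simp [conjTranspose_apply]
      rw [hQh] at h
      exact h
    have hsq := (hS t ht).1
    refine (open scoped MatrixOrder in (CFC.mul_self_eq_mul_self_iff (S t) _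
      ((Matrix.nonneg_iff_posSemidef).mpr hsq) ((Matrix.nonneg_iff_posSemidef).mpr hpsd)).mp) ?_
    rw [(hS t ht).2, hCmul, hMC]
    rw [show (fun i => Real.sqrt ((Real.exp (2*t) - 1) * d i + 1)
          * Real.sqrt ((Real.exp (2*t) - 1) * d i + 1))
        = fun i => (Real.exp (2*t) - 1) * d i + 1 from funext fun i => by
      rw [Real.mul_self_sqrt]
      have := hc t ht
      have := hd i
      nlinarith]
  have hCinv : ∀ v : Fin m → ℝ, (∀ i, v i ≠ 0) → (C v)⁻¹ = C (fun i => (v i)⁻¹) := by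
    intro v hv
    apply Matrix.inv_eq_right_inv
    rw [hCmul, show (fun i => v i * (v i)⁻¹) = fun _ : Fin m => (1:ℝ) from
      funext fun i => mul_inv_cancel₀ (hv i)]
    exact hCone
  have hUC : ∀ t : ℝ, 0 ≤ t →
      U t = C (fun i => Real.exp t * (Real.sqrt ((Real.exp (2*t) - 1) * d i + 1))⁻¹) * U₀ := by
    intro t ht
    rw [hU, hST t ht, hCinv _ (fun i => (hsqrtpos t ht i).ne')]
    rw [Matrix.mul_smul]
    rw [show (fun i => Real.exp t * (Real.sqrt ((Real.exp (2*t) - 1) * d i + 1))⁻¹)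
        = Real.exp t • (fun i => (Real.sqrt ((Real.exp (2*t) - 1) * d i + 1))⁻¹) from rfl]
    simp only [hCdef, Matrix.diagonal_smul, Matrix.smul_mul, Matrix.mul_smul]
  refine ⟨hMpd, ?_, ?_⟩
  · rw [hUC 0 le_rfl]
    rw [show (fun i => Real.exp 0 * (Real.sqrt ((Real.exp (2*0) - 1) * d i + 1))⁻¹)
        = fun _ : Fin m => (1:ℝ) from by funext i; norm_num]
    rw [hCone, Matrix.one_mul]
  · intro t ht i j
    set R := Qᵀ * U₀ with hRdef
    have hentry : ∀ (v : Fin m → ℝ), (C v * U₀) i j = ∑ k, (Q i k * R k j) * v k := by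
      intro v
      have h1 : C v * U₀ = (Q * Matrix.diagonal v) * R := by
        simp only [hCdef, hRdef, Matrix.mul_assoc]
      rw [h1, Matrix.mul_apply]
      exact Finset.sum_congr rfl fun k _ => by rw [Matrix.mul_diagonal]; ring
    have hkey : ∀ s ∈ Set.Ici (0:ℝ),
        U s i j = ∑ k, (Q i k * R k j) *
          (Real.exp s * (Real.sqrt ((Real.exp (2*s) - 1) * d k + 1))⁻¹) := by
      intro s hs
      rw [hUC s hs, hentry]
    set φ : Fin m → ℝ :=
      fun k => Real.exp t * (Real.sqrt ((Real.exp (2*t) - 1) * d k + 1))⁻¹ with hφdef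
    have hval : U t - U t * (U t)ᵀ * U t = C (fun k => φ k - d k * φ k ^ 3) * U₀ := by
      have hUt : U t = C φ * U₀ := hUC t ht
      have hUtT : (U t)ᵀ = U₀ᵀ * C φ := by rw [hUt, Matrix.transpose_mul, hCt]
      have e1 : U t * (U t)ᵀ = C (fun k => φ k * (d k * φ k)) := by
        calc U t * (U t)ᵀ = C φ * U₀ * (U₀ᵀ * C φ) := by rw [hUtT, hUt]
          _ = C φ * (U₀ * U₀ᵀ * C φ) := by
              rw [Matrix.mul_assoc, ← Matrix.mul_assoc U₀]
          _ = C φ * (C d * C φ) := by rw [hPC]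
          _ = C φ * C (fun k => d k * φ k) := by rw [hCmul]
          _ = C (fun k => φ k * (d k * φ k)) := by rw [hCmul]
      have e2 : U t * (U t)ᵀ * U t = C (fun k => (φ k * (d k * φ k)) * φ k) * U₀ := by
        rw [e1, hUt, ← Matrix.mul_assoc, hCmul]
      rw [e2, hUt, ← Matrix.sub_mul, hCsub,
        show (fun k => φ k - φ k * (d k * φ k) * φ k)
          = fun k => φ k - d k * φ k ^ 3 from funext fun k => by ring]
    have hvalentry : (U t - U t * (U t)ᵀ * U t) i j
        = ∑ k, (Q i k * R k j) * (φ k - d k * φ k ^ 3) := by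
      rw [hval, hentry]
    rw [hvalentry]
    have hsum : HasDerivAt
        (fun s => ∑ k, (Q i k * R k j) *
          (Real.exp s * (Real.sqrt ((Real.exp (2*s) - 1) * d k + 1))⁻¹))
        (∑ k, (Q i k * R k j) * (φ k - d k * φ k ^ 3)) t :=
      HasDerivAt.fun_sum fun k _ => (phi_deriv_ac (d k) t (hd k) ht).const_mul (Q i k * R k j)
    exact hsum.hasDerivWithinAt.congr hkey (hkey t (Set.mem_Ici.mpr ht))
end

section
/- Let m ≥ 1 be an integer and t > 0. For A ∈ ℝ^{m×m} define S_N(t)A = (M^{1/2})^{−1} e^t A, where M = (e^{2t} − 1)AAᵀ + I and M^{1/2} is the unique symmetric positive semidefinite square root of the symmetric positive definite matrix M. Then for every B ∈ ℝ^{m×m} with ‖B‖_F ≤ √m, one has ‖S_N(t)B‖_F ≤ √m. -/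
open Matrix

lemma psd_trace_nonneg {m : ℕ} {P : Matrix (Fin m) (Fin m) ℝ} (hP : P.PosSemidef) :
    0 ≤ P.trace := by
  refine Finset.sum_nonneg fun i _ => ?_
  have := hP.dotProduct_mulVec_nonneg (Pi.single i 1)
  simpa [dotProduct, mulVec, Pi.single_apply, mul_ite, Finset.sum_ite_eq] using this

lemma trace_mul_transpose_eq {m : ℕ} (A : Matrix (Fin m) (Fin m) ℝ) :
    trace (A * Aᵀ) = ∑ i, ∑ j, A i j ^ 2 := by
  simp [Matrix.trace, Matrix.mul_apply, Matrix.diag, pow_two]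

/-- The Frobenius norm of a real square matrix. -/
noncomputable def frobeniusNorm {m : ℕ} (A : Matrix (Fin m) (Fin m) ℝ) : ℝ :=
  Real.sqrt (∑ i, ∑ j, (A i j) ^ 2)

/-- Maximum principle (in Frobenius norm) for the nonlinear propagator of the
matrix-valued Allen-Cahn equation: if `‖B‖_F ≤ √m` then `‖S_N(t)B‖_F ≤ √m`, where
`S_N(t)B = M^{-1/2} e^t B` with `M = (e^{2t} - 1)BBᵀ + I` and `S` its unique symmetric
positive semidefinite square root. -/
theorem stmt_8 (m : ℕ) (hm : 1 ≤ m) (t : ℝ) (ht : 0 < t)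
    (B S : Matrix (Fin m) (Fin m) ℝ) (hSpsd : S.PosSemidef)
    (hSsq : S * S = (Real.exp (2 * t) - 1) • (B * Bᵀ) + 1)
    (hB : frobeniusNorm B ≤ Real.sqrt m) :
    frobeniusNorm (S⁻¹ * (Real.exp t • B)) ≤ Real.sqrt m := by
  classical
  set a : ℝ := Real.exp (2 * t) with ha
  have ha1 : 1 < a := by
    rw [ha, show (1:ℝ) = Real.exp 0 by simp]
    exact Real.exp_lt_exp.mpr (by linarith)
  have ha0 : 0 < a := lt_trans one_pos ha1
  set X : Matrix (Fin m) (Fin m) ℝ := B * Bᵀ with hX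
  have hXsymm : Xᵀ = X := by rw [hX, transpose_mul, transpose_transpose]
  have hXpsd : X.PosSemidef := by
    have := Matrix.posSemidef_self_mul_conjTranspose B
    simpa [Matrix.conjTranspose_eq_transpose_of_trivial] using this
  -- M is positive definite
  have hsmulpsd : ((a - 1) • X).PosSemidef := by
    refine .of_dotProduct_mulVec_nonneg ?_ (fun x => ?_)
    · show ((a-1) • X)ᴴ = _
      rw [conjTranspose_smul, hXpsd.1]
      simp
    · rw [smul_mulVec, dotProduct_smul, smul_eq_mul]
      exact mul_nonneg (by linarith) (hXpsd.dotProduct_mulVec_nonneg x)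
  have h1pd : (1 : Matrix (Fin m) (Fin m) ℝ).PosDef := by
    have := Matrix.PosDef.diagonal (d := fun _ : Fin m => (1:ℝ)) (fun _ => one_pos)
    simpa using this
  have hMpd : ((a - 1) • X + 1).PosDef := Matrix.PosDef.posSemidef_add hsmulpsd h1pd
  have hMdet : IsUnit ((a - 1) • X + 1).det := isUnit_iff_ne_zero.mpr hMpd.det_pos.ne'
  -- S is invertible
  have hdS : IsUnit S.det := by
    refine isUnit_iff_ne_zero.mpr fun h => ?_
    have h2 : (S * S).det = 0 := by rw [det_mul, h, mul_zero]
    rw [hSsq] at h2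
    exact hMpd.det_pos.ne' h2
  have hSsymm : Sᵀ = S := by
    rw [← conjTranspose_eq_transpose_of_trivial]
    exact hSpsd.1
  set N : Matrix (Fin m) (Fin m) ℝ := ((a - 1) • X + 1)⁻¹ with hN
  have hMN : ((a - 1) • X + 1) * N = 1 := mul_nonsing_inv _ hMdet
  have hNinv : S⁻¹ * S⁻¹ = N := by
    rw [hN, ← hSsq, Matrix.mul_inv_rev]
  -- the key algebraic identity, times N on the right
  have hkey : (a * a) • X = (a • (1 : Matrix (Fin m) (Fin m) ℝ) + (X - 1)) * ((a-1) • X + 1)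
      - (a-1) • ((X - 1) * (X - 1)) := by
    simp only [add_mul, sub_mul, mul_add, mul_sub, Matrix.smul_mul, Matrix.mul_smul,
      one_mul, mul_one, smul_smul, smul_sub, smul_add]
    module
  have hkeyN : (a * a) • (X * N) = (a • (1 : Matrix (Fin m) (Fin m) ℝ) + (X - 1))
      - (a-1) • ((X - 1) * ((X - 1) * N)) := by
    have h2 : ((a * a) • X) * N = ((a • (1 : Matrix (Fin m) (Fin m) ℝ) + (X - 1))
        * ((a-1) • X + 1) - (a-1) • ((X - 1) * (X - 1))) * N := by rw [hkey]
    rw [Matrix.smul_mul, Matrix.sub_mul, Matrix.smul_mul,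
      Matrix.mul_assoc (a • (1 : Matrix (Fin m) (Fin m) ℝ) + (X - 1)), hMN,
      Matrix.mul_one, Matrix.mul_assoc (X - 1) (X - 1) N] at h2
    exact h2
  -- trace of the quadratic remainder is nonnegative
  have hYsymm : (X - 1)ᵀ = X - 1 := by rw [transpose_sub, hXsymm, transpose_one]
  have hq : 0 ≤ trace ((X - 1) * ((X - 1) * N)) := by
    have hNpsd : ((X - 1) * N * (X - 1)ᴴ).PosSemidef :=
      (hMpd.inv.posSemidef).mul_mul_conjTranspose_same (X - 1)
    rw [conjTranspose_eq_transpose_of_trivial, hYsymm] at hNpsd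
    have h0 := psd_trace_nonneg hNpsd
    rwa [trace_mul_cycle, Matrix.mul_assoc] at h0
  -- trace bounds
  have htrX : trace X ≤ m := by
    have hnn : 0 ≤ ∑ i, ∑ j, (B i j) ^ 2 :=
      Finset.sum_nonneg fun i _ => Finset.sum_nonneg fun j _ => sq_nonneg _
    have h1 : Real.sqrt (∑ i, ∑ j, (B i j) ^ 2) ≤ Real.sqrt m := hB
    have h2 : (∑ i, ∑ j, (B i j) ^ 2) ≤ m := by
      have := mul_self_le_mul_self (Real.sqrt_nonneg _) h1
      rwa [Real.mul_self_sqrt hnn, Real.mul_self_sqrt (Nat.cast_nonneg m)] at this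
    calc trace X = ∑ i, ∑ j, (B i j) ^ 2 := trace_mul_transpose_eq B
      _ ≤ m := h2
  have htr1 : trace (1 : Matrix (Fin m) (Fin m) ℝ) = m := by
    simp [Matrix.trace_one]
  -- take traces in hkeyN
  have htrkey : (a * a) * trace (X * N) ≤ a * m := by
    have := congrArg Matrix.trace hkeyN
    rw [trace_smul, trace_sub, trace_add, trace_smul, trace_smul, trace_sub, htr1] at this
    have hc : (0:ℝ) ≤ (a - 1) * trace ((X - 1) * ((X - 1) * N)) :=
      mul_nonneg (by linarith) hq
    rw [smul_eq_mul, smul_eq_mul, smul_eq_mul] at this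
    nlinarith [htrX, hq]
  have htrN : a * trace (X * N) ≤ m := by
    nlinarith [htrkey]
  -- Frobenius norm computation
  set C : Matrix (Fin m) (Fin m) ℝ := S⁻¹ * (Real.exp t • B) with hC
  have het : Real.exp t * Real.exp t = a := by rw [ha, ← Real.exp_add, two_mul]
  have hCC : C * Cᵀ = a • (S⁻¹ * X * S⁻¹) := by
    rw [hC, hX, transpose_mul, transpose_smul, transpose_nonsing_inv, hSsymm]
    simp only [Matrix.mul_smul, Matrix.smul_mul, smul_smul, Matrix.mul_assoc]
    rw [het]
  have hsum : (∑ i, ∑ j, (C i j) ^ 2) = a * trace (X * N) := by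
    rw [← trace_mul_transpose_eq, hCC, trace_smul, smul_eq_mul]
    congr 1
    rw [trace_mul_cycle, trace_mul_comm, hNinv]
  rw [frobeniusNorm, hsum]
  exact Real.sqrt_le_sqrt htrN
end

section
/- Let m ≥ 1 be an integer, t > 0, and B ∈ ℝ^{m×m}. Define S_N(t)B = (M^{1/2})^{−1} e^t B, where M = (e^{2t} − 1)BBᵀ + I and M^{1/2} is the unique symmetric positive semidefinite square root of the symmetric positive definite matrix M. Let λ₁, …, λ_m be the (real, nonnegative) eigenvalues of the symmetric matrix BBᵀ, counted with multiplicity. Then ‖S_N(t)B‖_F² = Σ_{i=1}^m e^{2t} λ_i / ((e^{2t} − 1)λ_i + 1). -/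
open Matrix

/-- With `S_N(t)B = M^{-1/2} e^t B`, `M = (e^{2t} - 1)BBᵀ + I`, and
`λ₁,…,λ_m` the eigenvalues of the symmetric matrix `BBᵀ`, one has
`‖S_N(t)B‖_F² = Σ_i e^{2t} λ_i / ((e^{2t} - 1)λ_i + 1)`. -/
theorem stmt_11 (m : ℕ) (hm : 1 ≤ m) (t : ℝ) (ht : 0 < t)
    (B S : Matrix (Fin m) (Fin m) ℝ) (hSpsd : S.PosSemidef)
    (hSsq : S * S = (Real.exp (2 * t) - 1) • (B * Bᵀ) + 1)
    (hherm : (B * Bᵀ).IsHermitian) :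
    (frobeniusNorm (S⁻¹ * (Real.exp t • B))) ^ 2 =
      ∑ i, Real.exp (2 * t) * hherm.eigenvalues i /
        ((Real.exp (2 * t) - 1) * hherm.eigenvalues i + 1) := by
  classical
  set c := Real.exp (2 * t) - 1 with hcdef
  set A := B * Bᵀ with hAdef
  have hc0 : 0 < c := by
    have h1 : (1:ℝ) < Real.exp (2*t) := by
      rw [← Real.exp_zero]; exact Real.exp_lt_exp.mpr (by linarith)
    simp only [hcdef]; linarith
  have hA : A.PosSemidef := by
    have := Matrix.posSemidef_self_mul_conjTranspose B
    simpa [Matrix.conjTranspose_eq_transpose_of_trivial] using this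
  have hcA : (c • A).PosSemidef := by
    refine ⟨?_, fun x => ?_⟩
    · have hAT : Aᵀ = A := by
        have := hherm.eq
        rwa [Matrix.conjTranspose_eq_transpose_of_trivial] at this
      simp [Matrix.IsHermitian, Matrix.conjTranspose_smul, hAT]
    · exact (hA.smul hc0.le).2 x
  have hMpd : (c • A + 1).PosDef := Matrix.PosDef.posSemidef_add hcA Matrix.PosDef.one
  have hlam : ∀ i, 0 ≤ hherm.eigenvalues i := hA.eigenvalues_nonneg
  have hden : ∀ i, 0 < c * hherm.eigenvalues i + 1 := fun i => by
    have := mul_nonneg hc0.le (hlam i); linarith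
  -- S is invertible
  have hST : Sᵀ = S := by
    have := hSpsd.isHermitian.eq
    rwa [Matrix.conjTranspose_eq_transpose_of_trivial] at this
  have hdetS : IsUnit S.det := by
    have h2 : S.det * S.det = (c • A + 1).det := by rw [← Matrix.det_mul, hSsq]
    have h3 : (0:ℝ) < S.det * S.det := h2 ▸ hMpd.det_pos
    exact isUnit_iff_ne_zero.mpr (fun h => by simp [h] at h3)
  -- spectral theorem
  set U : Matrix (Fin m) (Fin m) ℝ := (hherm.eigenvectorUnitary : Matrix (Fin m) (Fin m) ℝ)
    with hUdef
  have hUU : U * star U = 1 := (Matrix.mem_unitaryGroup_iff).mp hherm.eigenvectorUnitary.2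
  have hUU' : star U * U = 1 := (Matrix.mem_unitaryGroup_iff').mp hherm.eigenvectorUnitary.2
  set lam := hherm.eigenvalues with hlamdef
  set D : Matrix (Fin m) (Fin m) ℝ := Matrix.diagonal lam with hDdef
  have hspec : A = U * D * star U := by
    have := hherm.spectral_theorem
    simpa [hUdef, hDdef, Function.comp] using this
  set D' : Matrix (Fin m) (Fin m) ℝ := Matrix.diagonal (fun i => (c * lam i + 1)⁻¹) with hD'def
  have cancel : ∀ X : Matrix (Fin m) (Fin m) ℝ, star U * (U * X) = X := fun X => by
    rw [← Matrix.mul_assoc, hUU', one_mul]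
  have key : ∀ d e : Fin m → ℝ,
      (U * Matrix.diagonal d * star U) * (U * Matrix.diagonal e * star U)
        = U * Matrix.diagonal (fun i => d i * e i) * star U := by
    intro d e
    simp only [Matrix.mul_assoc]
    rw [cancel, ← Matrix.mul_assoc (Matrix.diagonal d), Matrix.diagonal_mul_diagonal,
      ← Matrix.mul_assoc]
  have hMeq : c • A + 1 = U * Matrix.diagonal (fun i => c * lam i + 1) * star U := by
    have hd : Matrix.diagonal (fun i => c * lam i + 1) = c • D + 1 := by
      funext i j
      rcases eq_or_ne i j with h | h <;>
        simp [hDdef, Matrix.diagonal_apply, Matrix.one_apply, h]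
    rw [hd, hspec]
    simp only [Matrix.mul_add, Matrix.add_mul, Matrix.mul_smul, Matrix.smul_mul, Matrix.mul_one,
      Matrix.one_mul, hUU]
  have hMinv : (c • A + 1)⁻¹ = U * D' * star U := by
    apply Matrix.inv_eq_right_inv
    rw [hMeq, hD'def, key]
    have hone : (fun i => (c * lam i + 1) * (c * lam i + 1)⁻¹) = fun _ => (1:ℝ) := by
      funext i; exact mul_inv_cancel₀ (hden i).ne'
    rw [hone, Matrix.diagonal_one, Matrix.mul_one, hUU]
  have htr : (A * (c • A + 1)⁻¹).trace = ∑ i, lam i * (c * lam i + 1)⁻¹ := by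
    rw [hMinv, hspec, hDdef, hD'def, key, Matrix.trace_mul_cycle, hUU', one_mul,
      Matrix.trace_diagonal]
  -- Frobenius computation
  have hXXT : ∀ X : Matrix (Fin m) (Fin m) ℝ, ∑ i, ∑ j, (X i j)^2 = (X * Xᵀ).trace := by
    intro X
    simp [Matrix.trace, Matrix.mul_apply, Matrix.diag, sq]
  have hfrob : (frobeniusNorm (S⁻¹ * (Real.exp t • B))) ^ 2
      = ((S⁻¹ * (Real.exp t • B)) * (S⁻¹ * (Real.exp t • B))ᵀ).trace := by
    rw [frobeniusNorm, Real.sq_sqrt (by positivity), hXXT]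
  rw [hfrob]
  have hTr2 : (S⁻¹ * (Real.exp t • B)) * (S⁻¹ * (Real.exp t • B))ᵀ
      = Real.exp (2*t) • (S⁻¹ * A * S⁻¹) := by
    rw [Matrix.transpose_mul, Matrix.transpose_smul, Matrix.transpose_nonsing_inv, hST,
      show Real.exp (2*t) = Real.exp t * Real.exp t by rw [two_mul, Real.exp_add], hAdef]
    simp only [Matrix.mul_smul, Matrix.smul_mul, smul_smul, Matrix.mul_assoc]
  rw [hTr2, Matrix.trace_smul]
  have h5 : (S⁻¹ * A * S⁻¹).trace = (A * (c • A + 1)⁻¹).trace := by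
    rw [Matrix.trace_mul_cycle, ← Matrix.mul_assoc, ← Matrix.mul_inv_rev, hSsq,
      Matrix.mul_assoc, Matrix.trace_mul_comm]
  rw [h5, htr, smul_eq_mul, Finset.mul_sum]
  refine Finset.sum_congr rfl (fun i _ => ?_)
  rw [div_eq_mul_inv, mul_assoc]
end

section
/- Let m ≥ 1 be an integer and η₁ > 0. Let B : ℝ → ℝ^{m×m} be continuously differentiable on [0,1], such that for every s ∈ [0,1] the matrix B(s) is symmetric and satisfies ξᵀ B(s) ξ ≥ η₁ |ξ|² for all ξ ∈ ℝ^m (i.e. B(s) − η₁ I is positive semidefinite). Then the function s ↦ Tr(B(s)^{1/2}) is differentiable on [0,1] with derivative (d/ds) Tr(B(s)^{1/2}) = (1/2) Tr((B(s)^{1/2})^{−1} B'(s)), where B(s)^{1/2} denotes the unique symmetric positive semidefinite square root of the symmetric positive definite matrix B(s). -/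
/-!
Write `D = S r - S s`. Squaring gives `S s * D + D * S s + D * D = B r - B s`, so multiplying by
`(S s)⁻¹` and taking traces,
`2 tr D = tr ((S s)⁻¹ (B r - B s)) - tr ((S s)⁻¹ D²)`.
The first term has the claimed derivative. The second is `O(‖B r - B s‖²) = o(r - s)`: since
`S s ≥ √η₁` (the square root is monotone), the Sylvester operator `D ↦ S r D + D S s` is coercive
with constant `√η₁` in the Frobenius norm, whence `√η₁ ‖D‖ ≤ ‖B r - B s‖`.
-/

open Matrix Asymptotics Filter Topology
open scoped Matrix.Norms.Frobenius

section Frobenius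

variable {m n : Type*} [Fintype m] [Fintype n]

lemma Matrix.trace_transpose_mul_eq_inner (H M : Matrix m n ℝ) :
    trace (Hᵀ * M) = inner ℝ (WithLp.toLp 2 fun i => WithLp.toLp 2 (H i))
      (WithLp.toLp 2 fun i => WithLp.toLp 2 (M i)) := by
  simp only [trace, diag_apply, mul_apply, transpose_apply, PiLp.inner_apply, RCLike.inner_apply,
    Real.ringHom_apply]
  rw [Finset.sum_comm]
  simp only [mul_comm]

lemma Matrix.abs_trace_mul_le (A : Matrix n m ℝ) (X : Matrix m n ℝ) :
    |trace (A * X)| ≤ ‖A‖ * ‖X‖ := by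
  have h := abs_real_inner_le_norm (WithLp.toLp 2 fun i => WithLp.toLp 2 (Aᵀ i))
    (WithLp.toLp 2 fun i => WithLp.toLp 2 (X i))
  rw [← trace_transpose_mul_eq_inner, transpose_transpose] at h
  calc _ ≤ ‖Aᵀ‖ * ‖X‖ := h
    _ = ‖A‖ * ‖X‖ := by rw [frobenius_norm_transpose]

lemma Matrix.trace_transpose_mul_self (H : Matrix m n ℝ) : trace (Hᵀ * H) = ‖H‖ ^ 2 :=
  (trace_transpose_mul_eq_inner H H).trans (real_inner_self_eq_norm_sq _)

theorem Matrix.hasDerivWithinAt_of_entries {f : ℝ → Matrix m n ℝ} {f' : Matrix m n ℝ}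
    {t : Set ℝ} {x : ℝ} (h : ∀ i j, HasDerivWithinAt (fun r => f r i j) (f' i j) t x) :
    HasDerivWithinAt f f' t x := by
  let e : (m → n → ℝ) ≃L[ℝ] Matrix m n ℝ := (Matrix.ofLinearEquiv ℝ).toContinuousLinearEquiv
  exact e.hasFDerivAt.comp_hasDerivWithinAt x
    (hasDerivWithinAt_pi.2 fun i => hasDerivWithinAt_pi.2 (h i))

end Frobenius

theorem hasDerivWithinAt_zero_of_norm_sub_le_sq {𝕜 E F : Type*} [NontriviallyNormedField 𝕜]
    [NormedAddCommGroup E] [NormedSpace 𝕜 E] [NormedAddCommGroup F] [NormedSpace 𝕜 F]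
    {f : 𝕜 → F} {g : 𝕜 → E} {g' : E} {t : Set 𝕜} {x : 𝕜} {C : ℝ}
    (hg : HasDerivWithinAt g g' t x) (hf : ∀ r ∈ t, ‖f r - f x‖ ≤ C * ‖g r - g x‖ ^ 2) :
    HasDerivWithinAt f 0 t x := by
  rw [hasDerivWithinAt_iff_isLittleO]
  simp only [smul_zero, sub_zero]
  have hfg : (fun r => f r - f x) =O[𝓝[t] x] fun r => ‖g r - g x‖ ^ 2 :=
    IsBigO.of_bound C (eventually_nhdsWithin_of_forall fun r hr => by
      simpa [abs_of_nonneg (by positivity : (0 : ℝ) ≤ ‖g r - g x‖ ^ 2)] using hf r hr)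
  have hg₂ : (fun r => ‖g r - g x‖ ^ 2) =O[𝓝[t] x] fun r => ‖r - x‖ ^ 2 :=
    hg.hasFDerivWithinAt.isBigO_sub.norm_norm.pow 2
  exact hfg.trans_isLittleO
    (hg₂.trans_isLittleO ((isLittleO_pow_sub_sub x one_lt_two).mono nhdsWithin_le_nhds))

section PosSemidef

variable {n : Type*} [Fintype n] [DecidableEq n]

lemma Matrix.PosSemidef.sub_smul_one_of_le_dotProduct {A : Matrix n n ℝ} (hA : A.IsSymm) {c : ℝ}
    (h : ∀ ξ : n → ℝ, c * ∑ i, ξ i ^ 2 ≤ ξ ⬝ᵥ A *ᵥ ξ) : (A - c • 1).PosSemidef := by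
  refine .of_dotProduct_mulVec_nonneg
    (isHermitian_iff_isSymm.2 (hA.sub (isSymm_one.smul c))) fun ξ => ?_
  have hξ : ξ ⬝ᵥ ξ = ∑ i, ξ i ^ 2 := by simp [dotProduct, sq]
  simp only [star_trivial, sub_mulVec, smul_mulVec, one_mulVec, dotProduct_sub, dotProduct_smul,
    smul_eq_mul, hξ]
  linarith [h ξ]

open scoped MatrixOrder in
/-- The scalar case of the operator monotonicity of `√`, read off the spectra:
`x ∈ σ(S)` gives `x ^ 2 ∈ σ(S * S)`. -/
lemma Matrix.PosSemidef.sub_sqrt_smul_one {S : Matrix n n ℝ} (hS : S.PosSemidef) {a : ℝ}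
    (ha : (S * S - a • 1).PosSemidef) : (S - √a • 1).PosSemidef := by
  have hSS : ∀ y ∈ spectrum ℝ (S * S), a ≤ y := by
    rw [← algebraMap_le_iff_le_spectrum, Algebra.algebraMap_eq_smul_one]
    exact ha
  suffices algebraMap ℝ _ √a ≤ S by rwa [Algebra.algebraMap_eq_smul_one] at this
  rw [algebraMap_le_iff_le_spectrum]
  intro x hx
  have hx₀ : 0 ≤ x := spectrum_nonneg_of_nonneg hS.nonneg hx
  have hx₂ : a ≤ x * x := hSS _ (by simpa [sq] using spectrum.pow_mem_pow S 2 hx)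
  calc √a ≤ √(x * x) := Real.sqrt_le_sqrt hx₂
    _ = x := Real.sqrt_mul_self hx₀

lemma Matrix.PosSemidef.isUnit_det_of_sub_smul_one {A : Matrix n n ℝ} {c : ℝ} (hc : 0 < c)
    (hA : (A - c • 1).PosSemidef) : IsUnit A.det := by
  have hA' : A.PosDef := by simpa using PosDef.posSemidef_add hA (PosDef.one.smul hc)
  exact hA'.det_pos.ne'.isUnit

/-- Coercivity of the Sylvester operator `H ↦ P * H + H * Q` in the Frobenius norm. -/
lemma Matrix.mul_norm_le_norm_mul_add_mul {P Q H : Matrix n n ℝ} {c : ℝ} (hP : P.PosSemidef)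
    (hQ : (Q - c • 1).PosSemidef) : c * ‖H‖ ≤ ‖P * H + H * Q‖ := by
  have hPH : 0 ≤ trace (Hᵀ * P * H) := by
    simpa [conjTranspose_eq_transpose_of_trivial] using
      (hP.conjTranspose_mul_mul_same H).trace_nonneg
  have hQH : 0 ≤ trace (H * (Q - c • 1) * Hᵀ) := by
    simpa [conjTranspose_eq_transpose_of_trivial] using
      (hQ.mul_mul_conjTranspose_same H).trace_nonneg
  have hsplit : trace (Hᵀ * (P * H + H * Q))
      = trace (Hᵀ * P * H) + trace (H * (Q - c • 1) * Hᵀ) + c * trace (Hᵀ * H) := by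
    rw [Matrix.mul_add, trace_add, ← Matrix.mul_assoc Hᵀ P, trace_mul_comm Hᵀ (H * Q),
      Matrix.mul_sub, Matrix.sub_mul, trace_sub, Matrix.mul_smul, Matrix.mul_one, Matrix.smul_mul,
      trace_smul, trace_mul_comm H Hᵀ, smul_eq_mul]
    ring
  have hquad : c * ‖H‖ ^ 2 ≤ ‖H‖ * ‖P * H + H * Q‖ := by
    rw [← trace_transpose_mul_self]
    have := (le_abs_self _).trans (abs_trace_mul_le Hᵀ (P * H + H * Q))
    rw [frobenius_norm_transpose] at this
    linarith
  rcases (norm_nonneg H).eq_or_lt with hH | hH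
  · rw [← hH, mul_zero]
    exact norm_nonneg _
  · nlinarith

lemma Matrix.mul_norm_sub_le_norm_mul_self_sub_mul_self {P Q : Matrix n n ℝ} {c : ℝ}
    (hP : P.PosSemidef) (hQ : (Q - c • 1).PosSemidef) : c * ‖P - Q‖ ≤ ‖P * P - Q * Q‖ := by
  have hsyl : P * (P - Q) + (P - Q) * Q = P * P - Q * Q := by noncomm_ring
  exact hsyl ▸ mul_norm_le_norm_mul_add_mul hP hQ

end PosSemidef

lemma Matrix.trace_inv_mul_mul_self_sub_mul_self {n R : Type*} [Fintype n] [DecidableEq n]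
    [CommRing R] {A : Matrix n n R} (hA : IsUnit A.det) (X : Matrix n n R) :
    trace (A⁻¹ * (X * X - A * A)) = 2 * trace (X - A) + trace (A⁻¹ * ((X - A) * (X - A))) := by
  have hsq : X * X - A * A = A * (X - A) + (X - A) * A + (X - A) * (X - A) := by noncomm_ring
  rw [hsq, Matrix.mul_add, Matrix.mul_add, trace_add, trace_add, ← Matrix.mul_assoc,
    nonsing_inv_mul _ hA, Matrix.one_mul, ← Matrix.mul_assoc, trace_mul_cycle,
    mul_nonsing_inv _ hA, Matrix.one_mul]
  ring

theorem hasDerivWithinAt_trace_of_mul_self_eq {n : Type*} [Fintype n] [DecidableEq n]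
    {B S : ℝ → Matrix n n ℝ} {B' : Matrix n n ℝ} {t : Set ℝ} {s c : ℝ} (hc : 0 < c)
    (hB : HasDerivWithinAt B B' t s) (hS : ∀ r ∈ t, (S r).PosSemidef ∧ S r * S r = B r)
    (hs : s ∈ t) (hSc : (S s - c • 1).PosSemidef) :
    HasDerivWithinAt (fun r => trace (S r)) (1 / 2 * trace ((S s)⁻¹ * B')) t s := by
  have hSs : IsUnit (S s).det := hSc.isUnit_det_of_sub_smul_one hc
  let φ : Matrix n n ℝ →L[ℝ] ℝ :=
    LinearMap.toContinuousLinearMap (traceLinearMap _ ℝ ℝ ∘ₗ LinearMap.mulLeft ℝ (S s)⁻¹)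
  have heq : ∀ r ∈ t, trace (S r)
      = trace (S s) + 1 / 2 * φ (B r - B s) - 1 / 2 * φ ((S r - S s) * (S r - S s)) := by
    intro r hr
    have := trace_inv_mul_mul_self_sub_mul_self hSs (S r)
    rw [(hS r hr).2, (hS s hs).2, trace_sub] at this
    simp only [φ, LinearMap.coe_toContinuousLinearMap', LinearMap.comp_apply,
      LinearMap.mulLeft_apply, traceLinearMap_apply]
    linarith
  have hrem : HasDerivWithinAt (fun r => φ ((S r - S s) * (S r - S s))) 0 t s := by
    refine hasDerivWithinAt_zero_of_norm_sub_le_sq hB (C := ‖(S s)⁻¹‖ / c ^ 2) fun r hr => ?_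
    have hlip := mul_norm_sub_le_norm_mul_self_sub_mul_self (hS r hr).1 hSc
    rw [(hS r hr).2, (hS s hs).2] at hlip
    simp only [sub_self, mul_zero, map_zero, sub_zero, Real.norm_eq_abs]
    calc |trace ((S s)⁻¹ * ((S r - S s) * (S r - S s)))|
        ≤ ‖(S s)⁻¹‖ * ‖(S r - S s) * (S r - S s)‖ := abs_trace_mul_le _ _
      _ ≤ ‖(S s)⁻¹‖ * (‖S r - S s‖ * ‖S r - S s‖) := by gcongr; exact frobenius_norm_mul _ _
      _ = ‖(S s)⁻¹‖ / c ^ 2 * (c * ‖S r - S s‖) ^ 2 := by field_simp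
      _ ≤ ‖(S s)⁻¹‖ / c ^ 2 * ‖B r - B s‖ ^ 2 := by gcongr
  have hlin : HasDerivWithinAt (fun r => φ (B r - B s)) (φ B') t s :=
    φ.hasFDerivAt.comp_hasDerivWithinAt s (hB.sub_const _)
  refine ((((hlin.const_mul (1 / 2)).const_add (trace (S s))).sub
    (hrem.const_mul (1 / 2))).congr heq (heq s hs)).congr_deriv ?_
  simp [φ]

theorem stmt_15_general (m : ℕ) (η₁ : ℝ) (hη : 0 < η₁)
    (B B' S : ℝ → Matrix (Fin m) (Fin m) ℝ)
    (hB' : ∀ s ∈ Set.Icc (0 : ℝ) 1, ∀ i j : Fin m,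
      HasDerivWithinAt (fun r => B r i j) (B' s i j) (Set.Icc 0 1) s)
    (hsym : ∀ s ∈ Set.Icc (0 : ℝ) 1, (B s).IsSymm)
    (hbd : ∀ s ∈ Set.Icc (0 : ℝ) 1, ∀ ξ : Fin m → ℝ,
      η₁ * (∑ i, (ξ i) ^ 2) ≤ dotProduct ξ ((B s).mulVec ξ))
    (hS : ∀ s ∈ Set.Icc (0 : ℝ) 1, (S s).PosSemidef ∧ S s * S s = B s) :
    ∀ s ∈ Set.Icc (0 : ℝ) 1,
      HasDerivWithinAt (fun r => Matrix.trace (S r))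
        ((1 / 2) * Matrix.trace ((S s)⁻¹ * B' s)) (Set.Icc 0 1) s := by
  intro s hs
  have hSc : (S s - √η₁ • 1).PosSemidef := (hS s hs).1.sub_sqrt_smul_one <| by
    rw [(hS s hs).2]
    exact .sub_smul_one_of_le_dotProduct (hsym s hs) (hbd s hs)
  exact hasDerivWithinAt_trace_of_mul_self_eq (Real.sqrt_pos.2 hη)
    (hasDerivWithinAt_of_entries (hB' s hs)) hS hs hSc

/-- If `B : [0,1] → ℝ^{m×m}` is continuously differentiable (with derivative
`B'`), each `B(s)` is symmetric with `ξᵀ B(s) ξ ≥ η₁ |ξ|²` for all `ξ`, and `S s` is the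
unique symmetric positive semidefinite square root of `B(s)`, then `s ↦ Tr(B(s)^{1/2})`
is differentiable on `[0,1]` with derivative `(1/2) Tr((B(s)^{1/2})⁻¹ B'(s))`. -/
theorem stmt_15 (m : ℕ) (hm : 1 ≤ m) (η₁ : ℝ) (hη : 0 < η₁)
    (B B' S : ℝ → Matrix (Fin m) (Fin m) ℝ)
    (hB' : ∀ s ∈ Set.Icc (0 : ℝ) 1, ∀ i j : Fin m,
      HasDerivWithinAt (fun r => B r i j) (B' s i j) (Set.Icc 0 1) s)
    (hB'cont : ∀ i j : Fin m, ContinuousOn (fun s => B' s i j) (Set.Icc 0 1))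
    (hsym : ∀ s ∈ Set.Icc (0 : ℝ) 1, (B s).IsSymm)
    (hbd : ∀ s ∈ Set.Icc (0 : ℝ) 1, ∀ ξ : Fin m → ℝ,
      η₁ * (∑ i, (ξ i) ^ 2) ≤ dotProduct ξ ((B s).mulVec ξ))
    (hS : ∀ s ∈ Set.Icc (0 : ℝ) 1, (S s).PosSemidef ∧ S s * S s = B s) :
    ∀ s ∈ Set.Icc (0 : ℝ) 1,
      HasDerivWithinAt (fun r => Matrix.trace (S r))
        ((1 / 2) * Matrix.trace ((S s)⁻¹ * B' s)) (Set.Icc 0 1) s :=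
  stmt_15_general m η₁ hη B B' S hB' hsym hbd hS
end

section
/- Let m ≥ 1 be an integer, τ > 0, and U₀, H ∈ ℝ^{m×m} with ‖U₀‖_F ≤ √m and ‖U₀ + H‖_F ≤ √m. For s ∈ [0,1] set φ(s) = U₀ + sH and h(s) = Tr((1/(2τ)) φ(s)φ(s)ᵀ − (e^τ/(τ(e^{2τ} − 1))) ((I + (e^{2τ} − 1)φ(s)φ(s)ᵀ)^{1/2} − I)). Then h is differentiable at s = 0 with h'(0) = (1/τ) Tr(U₀Hᵀ) − (e^τ/τ) Tr(((I + (e^{2τ} − 1)U₀U₀ᵀ)^{1/2})^{−1} U₀ Hᵀ). -/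
open Matrix

attribute [local instance] Matrix.frobeniusSeminormedAddCommGroup
  Matrix.frobeniusNormedAddCommGroup Matrix.frobeniusNormedSpace

namespace Stmt16Aux

variable {n : ℕ}

lemma frob_eq_sqrt (A : Matrix (Fin n) (Fin n) ℝ) :
    ‖A‖ = Real.sqrt (∑ i, ∑ j, (A i j) ^ 2) := by
  rw [Matrix.frobenius_norm_def, Real.sqrt_eq_rpow]
  congr 1
  refine Finset.sum_congr rfl fun i _ => Finset.sum_congr rfl fun j _ => ?_
  rw [show ((2:ℝ) = ((2:ℕ):ℝ)) by norm_num, Real.rpow_natCast, Real.norm_eq_abs, sq_abs]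

lemma frob_sq (A : Matrix (Fin n) (Fin n) ℝ) :
    ‖A‖ ^ 2 = ∑ i, ∑ j, (A i j) ^ 2 := by
  rw [frob_eq_sqrt, Real.sq_sqrt]
  positivity

lemma trace_mul_le (X Y : Matrix (Fin n) (Fin n) ℝ) :
    |Matrix.trace (X * Y)| ≤ ‖X‖ * ‖Y‖ := by
  have h1 : Matrix.trace (X * Y) = ∑ p : Fin n × Fin n, X p.1 p.2 * Y p.2 p.1 := by
    rw [Matrix.trace, Fintype.sum_prod_type]
    simp [Matrix.diag, Matrix.mul_apply]
  have h2 : (∑ p : Fin n × Fin n, X p.1 p.2 * Y p.2 p.1) ^ 2 ≤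
      (∑ p : Fin n × Fin n, (X p.1 p.2) ^ 2) * (∑ p : Fin n × Fin n, (Y p.2 p.1) ^ 2) :=
    Finset.sum_mul_sq_le_sq_mul_sq _ _ _
  have hX : (∑ p : Fin n × Fin n, (X p.1 p.2) ^ 2) = ‖X‖ ^ 2 := by
    rw [frob_sq, Fintype.sum_prod_type]
  have hY : (∑ p : Fin n × Fin n, (Y p.2 p.1) ^ 2) = ‖Y‖ ^ 2 := by
    rw [frob_sq, Fintype.sum_prod_type, Finset.sum_comm]
  rw [h1]
  set t := ∑ p : Fin n × Fin n, X p.1 p.2 * Y p.2 p.1 with ht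
  calc |t| = Real.sqrt (t ^ 2) := (Real.sqrt_sq_eq_abs t).symm
    _ ≤ Real.sqrt ((∑ p : Fin n × Fin n, (X p.1 p.2) ^ 2) * (∑ p : Fin n × Fin n, (Y p.2 p.1) ^ 2)) :=
        Real.sqrt_le_sqrt h2
    _ = ‖X‖ * ‖Y‖ := by
        rw [Real.sqrt_mul (by positivity), hX, hY,
          Real.sqrt_sq (norm_nonneg X), Real.sqrt_sq (norm_nonneg Y)]

lemma trace_mul_self_of_symm {Δ : Matrix (Fin n) (Fin n) ℝ} (hΔ : Δᵀ = Δ) :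
    Matrix.trace (Δ * Δ) = ‖Δ‖ ^ 2 := by
  have hsym : ∀ i j, Δ j i = Δ i j := fun i j => by rw [show Δ j i = Δᵀ i j from rfl, hΔ]
  rw [frob_sq]
  simp only [Matrix.trace, Matrix.diag, Matrix.mul_apply]
  refine Finset.sum_congr rfl fun i _ => Finset.sum_congr rfl fun j _ => ?_
  rw [hsym i j, sq]

lemma trace_psd_nonneg {A : Matrix (Fin n) (Fin n) ℝ} (hA : A.PosSemidef) :
    0 ≤ Matrix.trace A := by
  rw [Matrix.trace]
  refine Finset.sum_nonneg fun i _ => ?_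
  exact hA.diag_nonneg

lemma psd_smul {a : ℝ} (ha : 0 ≤ a) {M : Matrix (Fin n) (Fin n) ℝ} (hM : M.PosSemidef) :
    (a • M).PosSemidef := by
  refine ⟨?_, fun x => ?_⟩
  · rw [Matrix.IsHermitian, Matrix.conjTranspose_smul, hM.1.eq, star_trivial]
  · exact (hM.smul ha).2 x

lemma sub_one_psd {B : Matrix (Fin n) (Fin n) ℝ} (hB : B.PosSemidef)
    (h2 : (B * B - 1).PosSemidef) : (B - 1).PosSemidef := by
  classical
  have hH : B.IsHermitian := hB.1
  set V : Matrix (Fin n) (Fin n) ℝ :=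
    (Matrix.IsHermitian.eigenvectorUnitary hH : Matrix (Fin n) (Fin n) ℝ) with hVdef
  have hVV : V * star V = 1 :=
    (Matrix.mem_unitaryGroup_iff).mp (Matrix.IsHermitian.eigenvectorUnitary hH).2
  have hVV' : star V * V = 1 :=
    (Matrix.mem_unitaryGroup_iff').mp (Matrix.IsHermitian.eigenvectorUnitary hH).2
  set ev : Fin n → ℝ := hH.eigenvalues with hev
  have hDiag : star V * B * V = Matrix.diagonal ev := by
    have := hH.conjStarAlgAut_star_eigenvectorUnitary
    simpa [Unitary.conjStarAlgAut_apply] using this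
  have hBspec : B = V * Matrix.diagonal ev * star V := by
    have := hH.spectral_theorem
    simpa [Unitary.conjStarAlgAut_apply] using this
  set N := star V * B * V with hN
  have hNN : N * N = star V * (B * B) * V := by
    calc N * N = star V * B * ((V * star V) * (B * V)) := by
          rw [hN]; noncomm_ring
      _ = star V * (B * B) * V := by rw [hVV]; noncomm_ring
  have hconj : star V * (B * B - 1) * V = Matrix.diagonal (fun i => ev i * ev i - 1) := by
    have e1 : star V * (B * B - 1) * V = star V * (B * B) * V - star V * 1 * V := by
      noncomm_ring
    rw [e1, ← hNN, Matrix.mul_one, hVV', hDiag, Matrix.diagonal_mul_diagonal,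
      ← Matrix.diagonal_one, Matrix.diagonal_sub]
  have hpsdD : (Matrix.diagonal (fun i => ev i * ev i - 1)).PosSemidef := by
    rw [← hconj]
    have := h2.conjTranspose_mul_mul_same (B := V)
    simpa [Matrix.star_eq_conjTranspose] using this
  have h1le : ∀ i, 1 ≤ ev i := by
    intro i
    have h₁ := Matrix.posSemidef_diagonal_iff.mp hpsdD i
    have h₂ : 0 ≤ ev i := hB.eigenvalues_nonneg i
    nlinarith
  have hpsd2 : (Matrix.diagonal (fun i => ev i - 1)).PosSemidef :=
    Matrix.posSemidef_diagonal_iff.mpr fun i => by linarith [h1le i]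
  have hfin := hpsd2.mul_mul_conjTranspose_same (B := V)
  have hBm : B - 1 = V * Matrix.diagonal (fun i => ev i - 1) * star V := by
    have : Matrix.diagonal (fun i => ev i - 1) = Matrix.diagonal ev - 1 := by
      rw [← Matrix.diagonal_one, Matrix.diagonal_sub]
    rw [this, Matrix.mul_sub, Matrix.sub_mul, Matrix.mul_one, hVV, ← hBspec]
  rw [hBm]
  simpa [Matrix.star_eq_conjTranspose] using hfin

end Stmt16Aux

set_option maxHeartbeats 1600000 in
/-- With `φ(s) = U₀ + sH`, `S s` the unique symmetric positive semidefinite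
square root of `I + (e^{2τ} - 1)φ(s)φ(s)ᵀ`, and
`h(s) = Tr((1/(2τ))φφᵀ - (e^τ/(τ(e^{2τ}-1)))((I + (e^{2τ}-1)φφᵀ)^{1/2} - I))`,
`h` is differentiable at `s = 0` with
`h'(0) = (1/τ)Tr(U₀Hᵀ) - (e^τ/τ)Tr((I + (e^{2τ}-1)U₀U₀ᵀ)^{-1/2} U₀Hᵀ)`. -/
theorem stmt_16 (m : ℕ) (hm : 1 ≤ m) (τ : ℝ) (hτ : 0 < τ)
    (U₀ H : Matrix (Fin m) (Fin m) ℝ)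
    (hU₀ : frobeniusNorm U₀ ≤ Real.sqrt m)
    (hUH : frobeniusNorm (U₀ + H) ≤ Real.sqrt m)
    (φ : ℝ → Matrix (Fin m) (Fin m) ℝ) (hφ : ∀ s : ℝ, φ s = U₀ + s • H)
    (S : ℝ → Matrix (Fin m) (Fin m) ℝ)
    (hS : ∀ s ∈ Set.Icc (0 : ℝ) 1, (S s).PosSemidef ∧
      S s * S s = 1 + (Real.exp (2 * τ) - 1) • (φ s * (φ s)ᵀ))
    (h : ℝ → ℝ)
    (hh : ∀ s : ℝ, h s = Matrix.trace
      ((1 / (2 * τ)) • (φ s * (φ s)ᵀ) -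
        (Real.exp τ / (τ * (Real.exp (2 * τ) - 1))) • (S s - 1))) :
    HasDerivWithinAt h
      ((1 / τ) * Matrix.trace (U₀ * Hᵀ) -
        (Real.exp τ / τ) * Matrix.trace ((S 0)⁻¹ * (U₀ * Hᵀ)))
      (Set.Icc 0 1) 0 := by
  classical
  have hct : ∀ (X : Matrix (Fin m) (Fin m) ℝ), Xᴴ = Xᵀ := fun X =>
    Matrix.conjTranspose_eq_transpose_of_trivial X
  have h01 : (0:ℝ) ∈ Set.Icc (0:ℝ) 1 := ⟨le_refl 0, zero_le_one⟩
  obtain ⟨hB0, hB2⟩ := hS 0 h01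
  have hφ0 : φ 0 = U₀ := by rw [hφ 0, zero_smul, add_zero]
  rw [hφ0] at hB2
  set a : ℝ := Real.exp (2 * τ) - 1 with ha_def
  have ha : 0 < a := by
    have h1 : (0:ℝ) < 2 * τ := by linarith
    have h2 := Real.exp_lt_exp.mpr h1
    rw [Real.exp_zero] at h2
    simp only [ha_def]; linarith
  set c : ℝ := Real.exp τ / (τ * a) with hc_def
  have hca : c * a = Real.exp τ / τ := by
    rw [hc_def]; field_simp
  set P : Matrix (Fin m) (Fin m) ℝ := U₀ * U₀ᵀ with hPdef
  set W : Matrix (Fin m) (Fin m) ℝ := U₀ * Hᵀ + H * U₀ᵀ with hWdef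
  set Vm : Matrix (Fin m) (Fin m) ℝ := H * Hᵀ with hVdef
  have hPpsd : P.PosSemidef := by
    rw [hPdef, ← hct U₀]; exact Matrix.posSemidef_self_mul_conjTranspose U₀
  have hφφ : ∀ s : ℝ, φ s * (φ s)ᵀ = P + s • W + (s^2) • Vm := by
    intro s
    rw [hφ s, hPdef, hWdef, hVdef, Matrix.transpose_add, Matrix.transpose_smul]
    rw [Matrix.add_mul, Matrix.mul_add, Matrix.mul_add, Matrix.smul_mul, Matrix.smul_mul,
      Matrix.mul_smul, Matrix.mul_smul, smul_smul, sq]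
    module
  have hBB1 : S 0 * S 0 - 1 = a • P := by rw [hB2]; abel
  have hBm1 : (S 0 - 1).PosSemidef :=
    Stmt16Aux.sub_one_psd hB0 (by rw [hBB1]; exact Stmt16Aux.psd_smul ha.le hPpsd)
  have hBpd : (S 0).PosDef := by
    have h1 := Matrix.PosDef.add_posSemidef Matrix.PosDef.one hBm1
    have h2 : (1 : Matrix (Fin m) (Fin m) ℝ) + (S 0 - 1) = S 0 := by abel
    rwa [h2] at h1
  have hdet : IsUnit (S 0).det := hBpd.det_pos.ne'.isUnit
  have hBinv : S 0 * (S 0)⁻¹ = 1 := Matrix.mul_nonsing_inv _ hdet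
  have hBinv' : (S 0)⁻¹ * S 0 = 1 := Matrix.nonsing_inv_mul _ hdet
  have hBt : (S 0)ᵀ = S 0 := by rw [← hct (S 0)]; exact hB0.1
  have hBinvt : ((S 0)⁻¹)ᵀ = (S 0)⁻¹ := by
    rw [Matrix.transpose_nonsing_inv, hBt]
  have htrW : Matrix.trace W = 2 * Matrix.trace (U₀ * Hᵀ) := by
    rw [hWdef, Matrix.trace_add]
    have e := Matrix.trace_transpose (H * U₀ᵀ)
    rw [Matrix.transpose_mul, Matrix.transpose_transpose] at e
    linarith [e]
  have htrBW : Matrix.trace ((S 0)⁻¹ * W) = 2 * Matrix.trace ((S 0)⁻¹ * (U₀ * Hᵀ)) := by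
    rw [hWdef, Matrix.mul_add, Matrix.trace_add]
    have e2 : Matrix.trace ((S 0)⁻¹ * (H * U₀ᵀ)) = Matrix.trace ((S 0)⁻¹ * (U₀ * Hᵀ)) := by
      conv_lhs => rw [← Matrix.trace_transpose]
      rw [Matrix.transpose_mul, Matrix.transpose_mul, Matrix.transpose_transpose, hBinvt,
        Matrix.trace_mul_comm]
    linarith [e2]
  set D : ℝ := (1 / τ) * Matrix.trace (U₀ * Hᵀ) -
      (Real.exp τ / τ) * Matrix.trace ((S 0)⁻¹ * (U₀ * Hᵀ)) with hDdef
  have hh' : ∀ s : ℝ, h s = (1/(2*τ)) * Matrix.trace (φ s * (φ s)ᵀ)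
      - c * Matrix.trace (S s - 1) := by
    intro s
    rw [hh s, Matrix.trace_sub, Matrix.trace_smul, Matrix.trace_smul, smul_eq_mul, smul_eq_mul]
  have htrφ : ∀ s : ℝ, Matrix.trace (φ s * (φ s)ᵀ) =
      Matrix.trace P + s * Matrix.trace W + s^2 * Matrix.trace Vm := by
    intro s
    rw [hφφ s, Matrix.trace_add, Matrix.trace_add, Matrix.trace_smul, Matrix.trace_smul,
      smul_eq_mul, smul_eq_mul]
  set Cc : ℝ := a * (‖W‖ + ‖Vm‖) with hCcdef
  have hCc0 : 0 ≤ Cc := mul_nonneg ha.le (add_nonneg (norm_nonneg _) (norm_nonneg _))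
  set K : ℝ := |(1/(2*τ)) * Matrix.trace Vm - (c*a/2) * Matrix.trace ((S 0)⁻¹ * Vm)|
      + |c|/2 * (‖(S 0)⁻¹‖ * (Cc^2/4)) with hKdef
  have hK0 : 0 ≤ K := by positivity
  have key : ∀ s ∈ Set.Icc (0:ℝ) 1, |h s - h 0 - s * D| ≤ K * s^2 := by
    intro s hs
    obtain ⟨hA0, hA2⟩ := hS s hs
    have hs0 : 0 ≤ s := hs.1
    have hs1 : s ≤ 1 := hs.2
    set Δ : Matrix (Fin m) (Fin m) ℝ := S s - S 0 with hΔdef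
    set E : Matrix (Fin m) (Fin m) ℝ := S s * S s - S 0 * S 0 with hEdef
    have hE : E = (a*s) • W + (a*s^2) • Vm := by
      rw [hEdef, hA2, hB2, hφφ s]
      module
    have hEn : ‖E‖ ≤ Cc * s := by
      rw [hE]
      calc ‖(a*s) • W + (a*s^2) • Vm‖ ≤ ‖(a*s) • W‖ + ‖(a*s^2) • Vm‖ := norm_add_le _ _
        _ = |a*s| * ‖W‖ + |a*s^2| * ‖Vm‖ := by
            rw [norm_smul, norm_smul, Real.norm_eq_abs, Real.norm_eq_abs]
        _ ≤ (a*s) * ‖W‖ + (a*s) * ‖Vm‖ := by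
            have h1 : |a*s| = a*s := abs_of_nonneg (by positivity)
            have h2 : |a*s^2| = a*s^2 := abs_of_nonneg (by positivity)
            have hss : s^2 ≤ s := by nlinarith
            have h3 : a*s^2 ≤ a*s := by nlinarith [mul_le_mul_of_nonneg_left hss ha.le]
            nlinarith [norm_nonneg W, norm_nonneg Vm]
        _ = Cc * s := by rw [hCcdef]; ring
    have hAt : (S s)ᵀ = S s := by rw [← hct (S s)]; exact hA0.1
    have hΔt : Δᵀ = Δ := by rw [hΔdef, Matrix.transpose_sub, hAt, hBt]
    have hAm1 : (S s - 1).PosSemidef := by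
      apply Stmt16Aux.sub_one_psd hA0
      have e1 : S s * S s - 1 = a • (φ s * (φ s)ᵀ) := by rw [hA2]; abel
      rw [e1]
      refine Stmt16Aux.psd_smul ha.le ?_
      rw [← hct (φ s)]
      exact Matrix.posSemidef_self_mul_conjTranspose (φ s)
    have hdec : E = Δ * S s + S 0 * Δ := by rw [hEdef, hΔdef]; noncomm_ring
    have ht1 : Matrix.trace (Δ * Δ) ≤ Matrix.trace (Δ * Δ * S s) := by
      have hp := hAm1.mul_mul_conjTranspose_same Δ
      rw [hct Δ, hΔt] at hp
      have hnn := Stmt16Aux.trace_psd_nonneg hp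
      have e3 : Δ * (S s - 1) * Δ = Δ * (S s) * Δ - Δ * Δ := by noncomm_ring
      rw [e3, Matrix.trace_sub, Matrix.trace_mul_cycle Δ (S s) Δ] at hnn
      linarith
    have ht2 : Matrix.trace (Δ * Δ) ≤ Matrix.trace (Δ * S 0 * Δ) := by
      have hp := hBm1.mul_mul_conjTranspose_same Δ
      rw [hct Δ, hΔt] at hp
      have hnn := Stmt16Aux.trace_psd_nonneg hp
      have e3 : Δ * (S 0 - 1) * Δ = Δ * (S 0) * Δ - Δ * Δ := by noncomm_ring
      rw [e3, Matrix.trace_sub] at hnn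
      linarith
    have htE : 2 * Matrix.trace (Δ * Δ) ≤ Matrix.trace (Δ * E) := by
      have e4 : Matrix.trace (Δ * E) = Matrix.trace (Δ * Δ * S s) + Matrix.trace (Δ * (S 0) * Δ) := by
        rw [hdec, Matrix.mul_add, Matrix.trace_add, ← Matrix.mul_assoc, ← Matrix.mul_assoc]
      linarith
    have htΔ : Matrix.trace (Δ * Δ) = ‖Δ‖^2 := Stmt16Aux.trace_mul_self_of_symm hΔt
    have hΔE : Matrix.trace (Δ * E) ≤ ‖Δ‖ * ‖E‖ :=
      (le_abs_self _).trans (Stmt16Aux.trace_mul_le Δ E)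
    have hΔn : ‖Δ‖ ≤ Cc * s / 2 := by
      rcases eq_or_lt_of_le (norm_nonneg Δ) with h0 | h0
      · rw [← h0]
        have := mul_nonneg hCc0 hs0
        linarith
      · have hmul : (2 * ‖Δ‖) * ‖Δ‖ ≤ (Cc * s) * ‖Δ‖ := by
          nlinarith [norm_nonneg E]
        have := le_of_mul_le_mul_right hmul h0
        linarith
    have hdec2 : Δ * S 0 + S 0 * Δ + Δ * Δ = E := by rw [hEdef, hΔdef]; noncomm_ring
    have htr1 : Matrix.trace ((S 0)⁻¹ * (Δ * S 0)) = Matrix.trace Δ := by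
      rw [← Matrix.mul_assoc, Matrix.trace_mul_cycle, hBinv, Matrix.one_mul]
    have htr2 : Matrix.trace ((S 0)⁻¹ * (S 0 * Δ)) = Matrix.trace Δ := by
      rw [← Matrix.mul_assoc, hBinv', Matrix.one_mul]
    have htrE : Matrix.trace ((S 0)⁻¹ * E) =
        2 * Matrix.trace Δ + Matrix.trace ((S 0)⁻¹ * (Δ * Δ)) := by
      rw [← hdec2, Matrix.mul_add, Matrix.mul_add, Matrix.trace_add, Matrix.trace_add,
        htr1, htr2]
      ring
    have htrE2 : Matrix.trace ((S 0)⁻¹ * E) = (a*s) * Matrix.trace ((S 0)⁻¹ * W)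
        + (a*s^2) * Matrix.trace ((S 0)⁻¹ * Vm) := by
      rw [hE, Matrix.mul_add, Matrix.trace_add, Matrix.mul_smul, Matrix.mul_smul,
        Matrix.trace_smul, Matrix.trace_smul, smul_eq_mul, smul_eq_mul]
    have htrΔ : Matrix.trace Δ = ((a*s) * Matrix.trace ((S 0)⁻¹ * W)
        + (a*s^2) * Matrix.trace ((S 0)⁻¹ * Vm) - Matrix.trace ((S 0)⁻¹ * (Δ * Δ))) / 2 := by
      rw [← htrE2]; linarith [htrE]
    have hΔtr : Matrix.trace (S s - 1) - Matrix.trace (S 0 - 1) = Matrix.trace Δ := by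
      rw [Matrix.trace_sub, Matrix.trace_sub, hΔdef, Matrix.trace_sub]
      ring
    have hhdiff : h s - h 0 = (1/(2*τ)) * (s * Matrix.trace W + s^2 * Matrix.trace Vm)
        - c * Matrix.trace Δ := by
      rw [hh' s, hh' 0, htrφ s, htrφ 0]
      linear_combination (-c) * hΔtr
    have hres : h s - h 0 - s * D =
        s^2 * ((1/(2*τ)) * Matrix.trace Vm - (c*a/2) * Matrix.trace ((S 0)⁻¹ * Vm))
        + (c/2) * Matrix.trace ((S 0)⁻¹ * (Δ * Δ)) := by
      rw [hhdiff, htrΔ, hDdef, htrW, htrBW, ← hca]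
      field_simp
      ring
    have hB2bound : |Matrix.trace ((S 0)⁻¹ * (Δ * Δ))| ≤ ‖(S 0)⁻¹‖ * (Cc^2 * s^2 / 4) := by
      calc |Matrix.trace ((S 0)⁻¹ * (Δ * Δ))| ≤ ‖(S 0)⁻¹‖ * ‖Δ * Δ‖ :=
            Stmt16Aux.trace_mul_le _ _
        _ ≤ ‖(S 0)⁻¹‖ * (‖Δ‖ * ‖Δ‖) :=
            mul_le_mul_of_nonneg_left (Matrix.frobenius_norm_mul Δ Δ) (norm_nonneg _)
        _ ≤ ‖(S 0)⁻¹‖ * (Cc^2 * s^2 / 4) := by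
            have h4 : ‖Δ‖ * ‖Δ‖ ≤ (Cc*s/2) * (Cc*s/2) :=
              mul_le_mul hΔn hΔn (norm_nonneg _) (by positivity)
            have h5 : (Cc*s/2) * (Cc*s/2) = Cc^2 * s^2 / 4 := by ring
            nlinarith [norm_nonneg ((S 0)⁻¹)]
    rw [hres, hKdef]
    set α : ℝ := (1/(2*τ)) * Matrix.trace Vm - (c*a/2) * Matrix.trace ((S 0)⁻¹ * Vm)
    set t : ℝ := Matrix.trace ((S 0)⁻¹ * (Δ * Δ))
    calc |s^2 * α + (c/2) * t| ≤ |s^2 * α| + |(c/2) * t| := abs_add_le _ _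
      _ = s^2 * |α| + |c|/2 * |t| := by
          rw [abs_mul, abs_mul, abs_of_nonneg (sq_nonneg s), abs_div]
          norm_num
      _ ≤ s^2 * |α| + |c|/2 * (‖(S 0)⁻¹‖ * (Cc^2 * s^2 / 4)) := by
          have := hB2bound
          have habs : 0 ≤ |c|/2 := by positivity
          nlinarith [abs_nonneg t]
      _ ≤ (|α| + |c|/2 * (‖(S 0)⁻¹‖ * (Cc^2/4))) * s^2 := by nlinarith [abs_nonneg c, norm_nonneg ((S 0)⁻¹), sq_nonneg s]
  -- conclude
  rw [hasDerivWithinAt_iff_isLittleO, Asymptotics.isLittleO_iff]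
  intro ε hε
  have hev1 : ∀ᶠ (y:ℝ) in nhdsWithin 0 (Set.Icc (0:ℝ) 1), |y - 0| < ε / (K+1) := by
    apply Filter.Eventually.filter_mono nhdsWithin_le_nhds
    exact eventually_abs_sub_lt 0 (by positivity)
  have hev2 : ∀ᶠ (y:ℝ) in nhdsWithin 0 (Set.Icc (0:ℝ) 1), y ∈ Set.Icc (0:ℝ) 1 :=
    eventually_mem_nhdsWithin
  filter_upwards [hev1, hev2] with y hy1 hy2
  have hk := key y hy2
  rw [sub_zero] at hy1
  rw [sub_zero, smul_eq_mul, Real.norm_eq_abs, Real.norm_eq_abs]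
  have hy0 : |y| ≤ ε/(K+1) := le_of_lt hy1
  have hsq : y^2 = |y| * |y| := by rw [sq]; exact (abs_mul_abs_self y).symm
  have hKK : (K+1) * (ε/(K+1)) = ε := by field_simp
  have hpos : 0 ≤ ε/(K+1) := by positivity
  have h3 : K * |y| ≤ ε := by
    have h4 := mul_le_mul_of_nonneg_left hy0 (by positivity : (0:ℝ) ≤ K+1)
    rw [hKK] at h4
    linarith [abs_nonneg y]
  have hfin : K * y^2 ≤ ε * |y| := by
    rw [hsq, ← mul_assoc]
    exact mul_le_mul_of_nonneg_right h3 (abs_nonneg y)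
  calc |h y - h 0 - y * D| ≤ K * y^2 := hk
    _ ≤ ε * |y| := hfin
end
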